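/- arXiv:2201.10383 — 2 statements merged into one kernel-verified Lean document; each statement's English description precedes it below -/
import Mathlib

section
/- If a candidate a is a Condorcet winner of a preference profile, then a has strictly positive maximin score while every other candidate has strictly negative maximin score; consequently a is the unique candidate with maximum maximin score, i.e., maximin is Condorcet-consistent. -/
/-- Pairwise score of `a` against `b` in a profile of linear orders
(votes represented as ranking bijections `Fin m ≃ C`). -/
def vs {C : Type*} {n m : ℕ} (P : Fin n → (Fin m ≃ C)) (a b : C) : ℤ :=
  ((Finset.univ.filter fun i => ((P i).symm a : ℕ) < ((P i).symm b : ℕ)).card : ℤ) -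
  ((Finset.univ.filter fun i => ((P i).symm b : ℕ) < ((P i).symm a : ℕ)).card : ℤ)

/-- Maximin score: `min_{b ≠ a} vs a b` (defaulting to `0` if there is no other
candidate, which does not occur when there are at least two candidates). -/
def maximin {C : Type*} [Fintype C] [DecidableEq C] {n m : ℕ}
    (P : Fin n → (Fin m ≃ C)) (a : C) : ℤ :=
  if h : (Finset.univ.erase a).Nonempty then
    (Finset.univ.erase a).inf' h (fun b => vs P a b)
  else 0

/-- if `a` is a Condorcet winner then `a` has strictly positive
maximin score, every other candidate has strictly negative maximin score, and
`a` is the unique maximizer of the maximin score. -/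
theorem stmt4 {C : Type*} [Fintype C] [DecidableEq C] {n m : ℕ}
    (P : Fin n → (Fin m ≃ C)) (hC : 2 ≤ Fintype.card C) (a : C)
    (hcond : ∀ b, b ≠ a → 0 < vs P a b) :
    0 < maximin P a ∧
    (∀ b, b ≠ a → maximin P b < 0) ∧
    (∀ b, b ≠ a → maximin P b < maximin P a) := by

  have hvs_anti : ∀ x y : C, vs P x y = - vs P y x := by
    intro x y; simp [vs]
  have hne : ∀ x : C, (Finset.univ.erase x).Nonempty := by
    intro x
    have : 1 ≤ (Finset.univ.erase x).card := by
      rw [Finset.card_erase_of_mem (Finset.mem_univ x)]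
      have : (Finset.univ : Finset C).card = Fintype.card C := rfl
      omega
    exact Finset.card_pos.mp (by omega)
  have hpos : 0 < maximin P a := by
    rw [maximin, dif_pos (hne a)]
    rw [Finset.lt_inf'_iff]
    intro b hb
    exact hcond b (Finset.ne_of_mem_erase hb)
  have hneg : ∀ b, b ≠ a → maximin P b < 0 := by
    intro b hb
    rw [maximin, dif_pos (hne b)]
    have ha : a ∈ Finset.univ.erase b := Finset.mem_erase.mpr ⟨fun h => hb h.symm, Finset.mem_univ a⟩
    have := Finset.inf'_le (fun c => vs P b c) ha
    have h2 : vs P b a < 0 := by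
      rw [hvs_anti]; linarith [hcond b hb]
    exact lt_of_le_of_lt this h2
  exact ⟨hpos, hneg, fun b hb => lt_trans (hneg b hb) hpos⟩
end

section
/- Let P be a profile with simplified Bucklin winning round ℓ, and let Q be any profile obtained from P by, in each vote, shifting a fixed candidate c up by some number of positions (possibly zero). Then for every candidate a ≠ c and every round r, the number of votes ranking a in the top r positions in Q is at most that in P; consequently, the simplified Bucklin score of every candidate a ≠ c in Q is at least its score in P, i.e., at least ℓ for the original winner. -/
/-- `topCount P r a` is the number of votes ranking candidate `a` within the top
`r` positions (positions are `0`-indexed; a vote is a ranking bijection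
`Fin m ≃ C`). -/
def topCount {C : Type*} {n m : ℕ} (P : Fin n → (Fin m ≃ C)) (r : ℕ) (a : C) : ℕ :=
  (Finset.univ.filter fun i => ((P i).symm a : ℕ) < r).card

lemma pos_eq_card {C : Type*} [Fintype C] [DecidableEq C] {m : ℕ} (e : Fin m ≃ C) (a : C) :
    ((e.symm a : ℕ)) = (Finset.univ.filter fun b => ((e.symm b : ℕ) < (e.symm a : ℕ))).card := by
  have h1 : (Finset.univ.filter fun b : C => ((e.symm b : ℕ) < (e.symm a : ℕ)))
      = (Finset.univ.filter fun j : Fin m => (j : ℕ) < (e.symm a : ℕ)).image e := by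
    ext b
    simp only [Finset.mem_image, Finset.mem_filter, Finset.mem_univ, true_and]
    constructor
    · intro h; exact ⟨e.symm b, h, e.apply_symm_apply b⟩
    · rintro ⟨j, hj, rfl⟩; simpa using hj
  rw [h1, Finset.card_image_of_injective _ e.injective]
  have : (Finset.univ.filter fun j : Fin m => (j : ℕ) < (e.symm a : ℕ)) = Finset.Iio (e.symm a) := by
    ext j; simp only [Finset.mem_filter, Finset.mem_univ, true_and, Finset.mem_Iio, Fin.lt_def]
  rw [this, Fin.card_Iio]

lemma pos_mono {C : Type*} [Fintype C] [DecidableEq C] {m : ℕ} (P Q : Fin m ≃ C) (c a : C)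
    (hac : a ≠ c)
    (h1 : (Q.symm c : ℕ) ≤ (P.symm c : ℕ))
    (h2 : ∀ x y, x ≠ c → y ≠ c →
      (((P.symm x : ℕ) < (P.symm y : ℕ)) ↔ ((Q.symm x : ℕ) < (Q.symm y : ℕ)))) :
    (P.symm a : ℕ) ≤ (Q.symm a : ℕ) := by
  by_contra hlt
  push_neg at hlt
  set SP := Finset.univ.filter fun b : C => ((P.symm b : ℕ) < (P.symm a : ℕ)) with hSP
  set SQ := Finset.univ.filter fun b : C => ((Q.symm b : ℕ) < (Q.symm a : ℕ)) with hSQ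
  set TP := Finset.univ.filter fun b : C => b ≠ c ∧ ((P.symm b : ℕ) < (P.symm a : ℕ)) with hTP
  set TQ := Finset.univ.filter fun b : C => b ≠ c ∧ ((Q.symm b : ℕ) < (Q.symm a : ℕ)) with hTQ
  have hPcard : (P.symm a : ℕ) = SP.card := pos_eq_card P a
  have hQcard : (Q.symm a : ℕ) = SQ.card := pos_eq_card Q a
  have hTeq : TP = TQ := by
    apply Finset.filter_congr
    intro b _
    constructor
    · rintro ⟨hb, hlt'⟩; exact ⟨hb, (h2 b a hb hac).mp hlt'⟩
    · rintro ⟨hb, hlt'⟩; exact ⟨hb, (h2 b a hb hac).mpr hlt'⟩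
  have hTQsub : TQ ⊆ SQ := by
    intro b hb
    simp only [hTQ, hSQ, Finset.mem_filter] at hb ⊢
    exact ⟨hb.1, hb.2.2⟩
  have hSPsub : SP ⊆ insert c TP := by
    intro b hb
    rw [Finset.mem_insert]
    by_cases hbc : b = c
    · exact Or.inl hbc
    · exact Or.inr (Finset.mem_filter.mpr
        ⟨Finset.mem_univ b, hbc, (Finset.mem_filter.mp hb).2⟩)
  have hk1 : SP.card ≤ TP.card + 1 := by
    calc SP.card ≤ (insert c TP).card := Finset.card_le_card hSPsub
    _ ≤ TP.card + 1 := Finset.card_insert_le _ _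
  have hk2 : TQ.card ≤ SQ.card := Finset.card_le_card hTQsub
  -- posQ a < posP a, posQ a ≥ TQ.card = TP.card, posP a ≤ TP.card + 1
  have hQge : TP.card ≤ (Q.symm a : ℕ) := by rw [hQcard, hTeq]; exact hk2
  have hPle : (P.symm a : ℕ) ≤ TP.card + 1 := by rw [hPcard]; exact hk1
  have hQeq : (Q.symm a : ℕ) = TP.card := by omega
  have hPeq : (P.symm a : ℕ) = TP.card + 1 := by omega
  have hSQeq : TQ = SQ := by
    apply Finset.eq_of_subset_of_card_le hTQsub
    rw [← hQcard, hQeq, hTeq]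
  have hcQ : ¬ ((Q.symm c : ℕ) < (Q.symm a : ℕ)) := by
    intro hcon
    have : c ∈ TQ := by
      rw [hSQeq]
      exact Finset.mem_filter.mpr ⟨Finset.mem_univ c, hcon⟩
    exact (Finset.mem_filter.mp this).2.1 rfl
  have hcP : (P.symm c : ℕ) < (P.symm a : ℕ) := by
    by_contra hcon
    have hsub : SP ⊆ TP := by
      intro b hb
      have hb' := Finset.mem_filter.mp hb
      refine Finset.mem_filter.mpr ⟨Finset.mem_univ b, ?_, hb'.2⟩
      rintro rfl; exact hcon hb'.2
    have := Finset.card_le_card hsub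
    omega
  have : (Q.symm c : ℕ) = (Q.symm a : ℕ) := by omega
  exact hac (Q.symm.injective (Fin.ext this)).symm

/-- if each vote of `Q` is obtained from the corresponding vote of
`P` by shifting candidate `c` up (possibly by zero positions) while preserving
the relative order of the other candidates, then for every candidate `a ≠ c` and
every round `r` the number of votes ranking `a` in the top `r` positions in `Q`
is at most that in `P`; consequently any `a ≠ c` reaching a strict majority at
round `r` in `Q` already did so in `P`, so if `ℓ` is the simplified Bucklin
winning round of `P` then no `a ≠ c` reaches a majority in `Q` before round `ℓ`
(its simplified Bucklin score in `Q` is at least its score in `P`, in particular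
at least `ℓ`). -/
theorem stmt12 {C : Type*} [Fintype C] [DecidableEq C] {n m : ℕ}
    (c : C) (P Q : Fin n → (Fin m ≃ C))
    (hshift : ∀ i, ((Q i).symm c : ℕ) ≤ ((P i).symm c : ℕ) ∧
      ∀ a b, a ≠ c → b ≠ c →
        (((P i).symm a : ℕ) < ((P i).symm b : ℕ) ↔
          ((Q i).symm a : ℕ) < ((Q i).symm b : ℕ)))
    (ℓ : ℕ)
    (hℓ : ∀ r : ℕ, r < ℓ → ∀ a : C, ¬ n < 2 * topCount P r a) :
    (∀ a, a ≠ c → ∀ r : ℕ, topCount Q r a ≤ topCount P r a) ∧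
    (∀ a, a ≠ c → ∀ r : ℕ, n < 2 * topCount Q r a → n < 2 * topCount P r a) ∧
    (∀ a, a ≠ c → ∀ r : ℕ, r < ℓ → ¬ n < 2 * topCount Q r a) := by
  have hmain : ∀ a, a ≠ c → ∀ r : ℕ, topCount Q r a ≤ topCount P r a := by
    intro a hac r
    apply Finset.card_le_card
    intro i hi
    have hi' := (Finset.mem_filter.mp hi).2
    refine Finset.mem_filter.mpr ⟨Finset.mem_univ i, ?_⟩
    have := pos_mono (P i) (Q i) c a hac (hshift i).1 (hshift i).2
    omega
  refine ⟨hmain, fun a hac r h => ?_, fun a hac r hr h => ?_⟩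
  · have := hmain a hac r; omega
  · have := hmain a hac r; exact hℓ r hr a (by omega)
end
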